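/- arXiv:1810.03782 — 4 statements merged into one kernel-verified Lean document; each statement's English description precedes it below -/
import Mathlib

section
/- Let F be a field and L a 5-dimensional non-abelian nilpotent Lie algebra over F with dim ⁅L,L⁆ = 1. Then L admits a basis e₁, …, e₅ realizing one of the following two bracket tables: either ⁅e₁,e₂⁆ = e₅ is the only nonzero bracket (H(2,1) ⊕ F(2)), or ⁅e₁,e₂⁆ = e₅ and ⁅e₃,e₄⁆ = e₅ are the only nonzero brackets (H(2,2)). -/
open Module


/-- `b` realizes the bracket table `t`: for `i < j`, `⁅b i, b j⁆` equals `b k` when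
`t i j = some k`, and `0` when `t i j = none`. -/
def Basis.RealizesLieTable {F L : Type*} [Field F] [LieRing L] [LieAlgebra F L] {n : ℕ}
    (b : Module.Basis (Fin n) F L) (t : ℕ → ℕ → Option (Fin n)) : Prop :=
  ∀ i j : Fin n, i < j → ⁅b i, b j⁆ = (t i.val j.val).elim (0 : L) b

/-- A 5-dimensional non-abelian nilpotent Lie algebra with one-dimensional derived
subalgebra is either `H(2,1) ⊕ F(2)` or `H(2,2)`: it admits a basis `e₁,…,e₅` whose only
nonzero brackets are `⁅e₁,e₂⁆ = e₅`, or `⁅e₁,e₂⁆ = e₅` and `⁅e₃,e₄⁆ = e₅`. -/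
theorem dim_five_nilpotent_derived_dim_one
    (F : Type*) (L : Type*) [Field F] [LieRing L] [LieAlgebra F L]
    [FiniteDimensional F L]
    (hnil : LieModule.IsNilpotent L L)
    (hna : LieAlgebra.derivedSeries F L 1 ≠ ⊥)
    (hdim : Module.finrank F L = 5)
    (h1 : Module.finrank F (LieAlgebra.derivedSeries F L 1) = 1) :
    ∃ b : Module.Basis (Fin 5) F L,
      Basis.RealizesLieTable b (fun i j =>
        match i, j with
        | 0, 1 => some 4
        | _, _ => none) ∨
      Basis.RealizesLieTable b (fun i j =>
        match i, j with
        | 0, 1 => some 4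
        | 2, 3 => some 4
        | _, _ => none) := by
  classical
  have hDdef : LieAlgebra.derivedSeries F L 1 = ⁅(⊤ : LieIdeal F L), (⊤ : LieIdeal F L)⁆ := by
    rw [LieAlgebra.derivedSeries_def, LieAlgebra.derivedSeriesOfIdeal_succ,
      LieAlgebra.derivedSeriesOfIdeal_zero]
  obtain ⟨a, b, hab⟩ : ∃ a b : L, ⁅a, b⁆ ≠ 0 := by
    by_contra h
    push_neg at h
    exact hna (by rw [hDdef, LieSubmodule.lie_eq_bot_iff]; exact fun x _ m _ => h x m)
  set z := ⁅a, b⁆ with hz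
  have hzD : ∀ x y : L, ⁅x, y⁆ ∈ LieAlgebra.derivedSeries F L 1 := by
    intro x y
    rw [hDdef]
    exact LieSubmodule.lie_mem_lie (LieSubmodule.mem_top x) (LieSubmodule.mem_top y)
  have hspan : LieSubmodule.toSubmodule (LieAlgebra.derivedSeries F L 1)
      = Submodule.span F {z} := by
    refine (Submodule.eq_of_le_of_finrank_le ?_ ?_).symm
    · simpa [Submodule.span_le] using hzD a b
    · rw [finrank_span_singleton hab]
      exact le_of_eq h1
  have hbr : ∀ x y : L, ∃ c : F, ⁅x, y⁆ = c • z := by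
    intro x y
    have := hzD x y
    rw [← LieSubmodule.mem_toSubmodule, hspan, Submodule.mem_span_singleton] at this
    obtain ⟨c, hc⟩ := this
    exact ⟨c, hc.symm⟩
  have hcentz : ∀ x : L, ⁅x, z⁆ = 0 := by
    intro x
    obtain ⟨c, hc⟩ := hbr x z
    rcases eq_or_ne c 0 with h0 | h0
    · rw [hc, h0, zero_smul]
    · exfalso
      have hxz : ⁅c⁻¹ • x, z⁆ = z := by
        rw [smul_lie, hc, smul_smul, inv_mul_cancel₀ h0, one_smul]
      have key : ∀ n, z ∈ LieModule.lowerCentralSeries F L L n := by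
        intro n
        induction n with
        | zero => simp
        | succ n ih =>
          rw [LieModule.lowerCentralSeries_succ]
          exact hxz ▸ LieSubmodule.lie_mem_lie (LieSubmodule.mem_top _) ih
      obtain ⟨k, hk⟩ := (haveI := hnil; LieModule.IsNilpotent.nilpotent F L L)
      exact hab (by simpa [hk] using key k)
  have hcentz' : ∀ x : L, ⁅z, x⁆ = 0 := fun x => by
    rw [← lie_skew, hcentz, neg_zero]
  have hba : ⁅b, a⁆ = -z := by rw [← lie_skew, hz]
  -- projection into the perp of span{a,b}
  have proj : ∀ w : L, ∃ s t : F,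
      ⁅w + s • a + t • b, a⁆ = 0 ∧ ⁅w + s • a + t • b, b⁆ = 0 := by
    intro w
    obtain ⟨c1, hc1⟩ := hbr w a
    obtain ⟨c2, hc2⟩ := hbr w b
    refine ⟨-c2, c1, ?_, ?_⟩
    · rw [add_lie, add_lie, smul_lie, smul_lie, hc1, lie_self, hba]
      simp [smul_neg]
    · rw [add_lie, add_lie, smul_lie, smul_lie, hc2, ← hz, lie_self]
      simp
  by_cases hcase : ∀ u v : L, (⁅u, a⁆ = 0 ∧ ⁅u, b⁆ = 0) → (⁅v, a⁆ = 0 ∧ ⁅v, b⁆ = 0) →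
      ⁅u, v⁆ = 0
  · -- H(2,1) ⊕ F²  case
    -- independent triple a b z
    have I3 : LinearIndependent F ![a, b, z] := by
      rw [Fintype.linearIndependent_iff]
      intro g hg
      rw [Fin.sum_univ_three] at hg
      simp only [Matrix.cons_val_zero, Matrix.cons_val_one, Matrix.head_cons,
        Matrix.cons_val_two, Matrix.tail_cons] at hg
      have e0 := congrArg (fun u : L => ⁅u, b⁆) hg
      simp only [add_lie, smul_lie, lie_self, ← hz, hcentz', smul_zero, add_zero, zero_add,
        zero_lie] at e0
      have hg0 : g 0 = 0 := by
        rcases smul_eq_zero.mp e0 with h | h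
        · exact h
        · exact absurd h hab
      have e1 := congrArg (fun u : L => ⁅u, a⁆) hg
      simp only [add_lie, smul_lie, lie_self, hba, hcentz', smul_zero, add_zero, zero_add,
        zero_lie, smul_neg, neg_eq_zero] at e1
      have hg1 : g 1 = 0 := by
        rcases smul_eq_zero.mp e1 with h | h
        · exact h
        · exact absurd h hab
      rw [hg0, hg1, zero_smul, zero_smul, zero_add, zero_add] at hg
      have hg2 : g 2 = 0 := by
        rcases smul_eq_zero.mp hg with h | h
        · exact h
        · exact absurd h hab
      intro i; fin_cases i <;> assumption
    -- extend to five independent vectors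
    have hft : finrank F (⊤ : Submodule F L) = 5 := by rw [finrank_top, hdim]
    obtain ⟨x3', hx3'⟩ : ∃ x, x ∉ Submodule.span F (Set.range ![a, b, z]) := by
      by_contra h
      push_neg at h
      have htop : Submodule.span F (Set.range ![a, b, z]) = ⊤ :=
        Submodule.eq_top_iff'.mpr h
      have := finrank_range_le_card (R := F) ![a, b, z]
      rw [Set.finrank, htop, hft] at this
      simp at this
    have I4 : LinearIndependent F (Fin.cons x3' ![a, b, z] : Fin 4 → L) :=
      linearIndependent_fin_cons.mpr ⟨I3, hx3'⟩
    obtain ⟨x4', hx4'⟩ : ∃ x, x ∉ Submodule.span F (Set.range (Fin.cons x3' ![a, b, z] : Fin 4 → L)) := by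
      by_contra h
      push_neg at h
      have htop : Submodule.span F (Set.range (Fin.cons x3' ![a, b, z] : Fin 4 → L)) = ⊤ :=
        Submodule.eq_top_iff'.mpr h
      have := finrank_range_le_card (R := F) (Fin.cons x3' ![a, b, z] : Fin 4 → L)
      rw [Set.finrank, htop, hft] at this
      simp at this
    have I5 : LinearIndependent F (Fin.cons x4' (Fin.cons x3' ![a, b, z]) : Fin 5 → L) :=
      linearIndependent_fin_cons.mpr ⟨I4, hx4'⟩
    have hspan5 : Submodule.span F (Set.range (Fin.cons x4' (Fin.cons x3' ![a, b, z]) : Fin 5 → L)) = ⊤ := by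
      apply Submodule.eq_top_of_finrank_eq
      rw [finrank_span_eq_card I5, hdim]
      simp
    obtain ⟨s3, t3, h3a, h3b⟩ := proj x3'
    obtain ⟨s4, t4, h4a, h4b⟩ := proj x4'
    set x3 := x3' + s3 • a + t3 • b with hx3
    set x4 := x4' + s4 • a + t4 • b with hx4
    have h34 : ⁅x3, x4⁆ = 0 := hcase x3 x4 ⟨h3a, h3b⟩ ⟨h4a, h4b⟩
    set v : Fin 5 → L := ![a, b, x3, x4, z] with hv
    have hsub : Submodule.span F (Set.range (Fin.cons x4' (Fin.cons x3' ![a, b, z]) : Fin 5 → L))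
        ≤ Submodule.span F (Set.range v) := by
      rw [Submodule.span_le]
      rintro u ⟨i, rfl⟩
      have ha' : a ∈ Submodule.span F (Set.range v) :=
        Submodule.subset_span ⟨0, rfl⟩
      have hb' : b ∈ Submodule.span F (Set.range v) :=
        Submodule.subset_span ⟨1, rfl⟩
      have hx3m : x3 ∈ Submodule.span F (Set.range v) :=
        Submodule.subset_span ⟨2, rfl⟩
      have hx4m : x4 ∈ Submodule.span F (Set.range v) :=
        Submodule.subset_span ⟨3, rfl⟩
      have hzm : z ∈ Submodule.span F (Set.range v) :=
        Submodule.subset_span ⟨4, rfl⟩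
      have hx3'm : x3' ∈ Submodule.span F (Set.range v) := by
        have : x3' = x3 - s3 • a - t3 • b := by rw [hx3]; abel
        rw [this]
        exact Submodule.sub_mem _ (Submodule.sub_mem _ hx3m (Submodule.smul_mem _ _ ha'))
          (Submodule.smul_mem _ _ hb')
      have hx4'm : x4' ∈ Submodule.span F (Set.range v) := by
        have : x4' = x4 - s4 • a - t4 • b := by rw [hx4]; abel
        rw [this]
        exact Submodule.sub_mem _ (Submodule.sub_mem _ hx4m (Submodule.smul_mem _ _ ha'))
          (Submodule.smul_mem _ _ hb')
      fin_cases i <;> simpa using by assumption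
    have htople : ⊤ ≤ Submodule.span F (Set.range v) := by
      rw [← hspan5]; exact hsub
    have hcard : Fintype.card (Fin 5) = finrank F L := by rw [hdim]; simp
    refine ⟨basisOfTopLeSpanOfCardEqFinrank v htople hcard, Or.inl ?_⟩
    intro i j hij
    have hcoe := coe_basisOfTopLeSpanOfCardEqFinrank v htople hcard
    -- bracket facts
    have B01 : ⁅v 0, v 1⁆ = v 4 := by simp [hv, hz]
    have B02 : ⁅v 0, v 2⁆ = 0 := by
      show ⁅a, x3⁆ = 0
      rw [← lie_skew, h3a, neg_zero]
    have B03 : ⁅v 0, v 3⁆ = 0 := by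
      show ⁅a, x4⁆ = 0
      rw [← lie_skew, h4a, neg_zero]
    have B04 : ⁅v 0, v 4⁆ = 0 := hcentz a
    have B12 : ⁅v 1, v 2⁆ = 0 := by
      show ⁅b, x3⁆ = 0
      rw [← lie_skew, h3b, neg_zero]
    have B13 : ⁅v 1, v 3⁆ = 0 := by
      show ⁅b, x4⁆ = 0
      rw [← lie_skew, h4b, neg_zero]
    have B14 : ⁅v 1, v 4⁆ = 0 := hcentz b
    have B23 : ⁅v 2, v 3⁆ = 0 := h34
    have B24 : ⁅v 2, v 4⁆ = 0 := hcentz x3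
    have B34 : ⁅v 3, v 4⁆ = 0 := hcentz x4
    fin_cases i <;> fin_cases j <;>
      first
        | exact absurd hij (by decide)
        | (simp only [hcoe]; first
            | exact B01 | exact B02 | exact B03 | exact B04 | exact B12 | exact B13
            | exact B14 | exact B23 | exact B24 | exact B34)
  · -- H(2,2) case
    push_neg at hcase
    obtain ⟨u, w, hu, hw, huw⟩ := hcase
    obtain ⟨c, hc⟩ := hbr u w
    have hc0 : c ≠ 0 := by
      intro h; rw [h, zero_smul] at hc; exact huw hc
    set x3 := c⁻¹ • u with hx3
    set x4 := w with hx4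
    have h3a : ⁅x3, a⁆ = 0 := by rw [hx3, smul_lie, hu.1, smul_zero]
    have h3b : ⁅x3, b⁆ = 0 := by rw [hx3, smul_lie, hu.2, smul_zero]
    have h4a : ⁅x4, a⁆ = 0 := hw.1
    have h4b : ⁅x4, b⁆ = 0 := hw.2
    have h34 : ⁅x3, x4⁆ = z := by
      rw [hx3, smul_lie, hc, smul_smul, inv_mul_cancel₀ hc0, one_smul]
    have h43 : ⁅x4, x3⁆ = -z := by rw [← lie_skew, h34]
    set v : Fin 5 → L := ![a, b, x3, x4, z] with hv
    have I5 : LinearIndependent F v := by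
      rw [Fintype.linearIndependent_iff]
      intro g hg
      rw [Fin.sum_univ_five] at hg
      simp only [hv, Matrix.cons_val_zero, Matrix.cons_val_one, Matrix.head_cons,
        Matrix.cons_val_two, Matrix.tail_cons, Matrix.cons_val_three,
        Matrix.cons_val_four] at hg
      have key : ∀ i : F, ∀ y : L, (∀ d : F, i • d • z = 0 → i = 0) → True := fun _ _ _ => trivial
      have e0 := congrArg (fun q : L => ⁅q, b⁆) hg
      simp only [add_lie, smul_lie, lie_self, ← hz, hcentz', h3b, h4b, smul_zero, add_zero,
        zero_add, zero_lie] at e0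
      have hg0 : g 0 = 0 := by
        rcases smul_eq_zero.mp e0 with h | h
        · exact h
        · exact absurd h hab
      have e1 := congrArg (fun q : L => ⁅q, a⁆) hg
      simp only [add_lie, smul_lie, lie_self, hba, hcentz', h3a, h4a, smul_zero, add_zero,
        zero_add, zero_lie, smul_neg, neg_eq_zero] at e1
      have hg1 : g 1 = 0 := by
        rcases smul_eq_zero.mp e1 with h | h
        · exact h
        · exact absurd h hab
      have e2 := congrArg (fun q : L => ⁅q, x4⁆) hg
      have hax4 : ⁅a, x4⁆ = 0 := by rw [← lie_skew, h4a, neg_zero]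
      have hbx4 : ⁅b, x4⁆ = 0 := by rw [← lie_skew, h4b, neg_zero]
      simp only [add_lie, smul_lie, lie_self, hax4, hbx4, h34, hcentz', smul_zero, add_zero,
        zero_add, zero_lie] at e2
      have hg2 : g 2 = 0 := by
        rcases smul_eq_zero.mp e2 with h | h
        · exact h
        · exact absurd h hab
      have e3 := congrArg (fun q : L => ⁅q, x3⁆) hg
      have hax3 : ⁅a, x3⁆ = 0 := by rw [← lie_skew, h3a, neg_zero]
      have hbx3 : ⁅b, x3⁆ = 0 := by rw [← lie_skew, h3b, neg_zero]
      simp only [add_lie, smul_lie, lie_self, hax3, hbx3, h43, hcentz', smul_zero, add_zero,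
        zero_add, zero_lie, smul_neg, neg_eq_zero] at e3
      have hg3 : g 3 = 0 := by
        rcases smul_eq_zero.mp e3 with h | h
        · exact h
        · exact absurd h hab
      rw [hg0, hg1, hg2, hg3] at hg
      simp only [zero_smul, zero_add] at hg
      have hg4 : g 4 = 0 := by
        rcases smul_eq_zero.mp hg with h | h
        · exact h
        · exact absurd h hab
      intro i; fin_cases i <;> assumption
    have hcard : Fintype.card (Fin 5) = finrank F L := by rw [hdim]; simp
    refine ⟨basisOfLinearIndependentOfCardEqFinrank I5 hcard, Or.inr ?_⟩
    intro i j hij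
    have hcoe := coe_basisOfLinearIndependentOfCardEqFinrank I5 hcard
    have B01 : ⁅v 0, v 1⁆ = v 4 := by simp [hv, hz]
    have B02 : ⁅v 0, v 2⁆ = 0 := by
      show ⁅a, x3⁆ = 0
      rw [← lie_skew, h3a, neg_zero]
    have B03 : ⁅v 0, v 3⁆ = 0 := by
      show ⁅a, x4⁆ = 0
      rw [← lie_skew, h4a, neg_zero]
    have B04 : ⁅v 0, v 4⁆ = 0 := hcentz a
    have B12 : ⁅v 1, v 2⁆ = 0 := by
      show ⁅b, x3⁆ = 0
      rw [← lie_skew, h3b, neg_zero]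
    have B13 : ⁅v 1, v 3⁆ = 0 := by
      show ⁅b, x4⁆ = 0
      rw [← lie_skew, h4b, neg_zero]
    have B14 : ⁅v 1, v 4⁆ = 0 := hcentz b
    have B23 : ⁅v 2, v 3⁆ = v 4 := h34
    have B24 : ⁅v 2, v 4⁆ = 0 := hcentz x3
    have B34 : ⁅v 3, v 4⁆ = 0 := hcentz x4
    fin_cases i <;> fin_cases j <;>
      first
        | exact absurd hij (by decide)
        | (simp only [hcoe]; first
            | exact B01 | exact B02 | exact B03 | exact B04 | exact B12 | exact B13
            | exact B14 | exact B23 | exact B24 | exact B34)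
end

section
/- Let F be a field and L a 5-dimensional nilpotent Lie algebra over F with dim Z(L) = 1 which admits a basis e₁, …, e₅ in which e₅ is central, ⁅e₁,e₂⁆ = e₃, ⁅e₂,e₃⁆ = e₄, ⁅e₁,e₃⁆ = β·e₅ and ⁅e₂,e₄⁆ = γ·e₅ for some scalars β, γ ∈ F, and all other brackets of pairs of basis elements are zero. Then γ ≠ 0 and L admits a basis f₁, …, f₅ with ⁅f₁,f₂⁆ = f₃, ⁅f₂,f₃⁆ = f₄, ⁅f₂,f₄⁆ = f₅, with either ⁅f₁,f₃⁆ = 0 or ⁅f₁,f₃⁆ = f₅, and with all other brackets of pairs of basis elements zero (the algebras A_{5,6} and A_{5,7}). This is Case 2(i) of Section 3 of the paper, specialized to n = 2. -/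
set_option maxHeartbeats 1000000

/-- Case 2(i) of Section 3 of the paper for `n = 2`: a 5-dimensional nilpotent Lie algebra
with one-dimensional center admitting a basis `e₁,…,e₅` with `e₅` central, `⁅e₁,e₂⁆ = e₃`,
`⁅e₂,e₃⁆ = e₄`, `⁅e₁,e₃⁆ = β·e₅`, `⁅e₂,e₄⁆ = γ·e₅` and all other basis brackets zero
satisfies `γ ≠ 0` and is `A_{5,6}` or `A_{5,7}`. -/
theorem case_two_i_dim_center_one
    (F : Type*) (L : Type*) [Field F] [LieRing L] [LieAlgebra F L]
    [FiniteDimensional F L]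
    (hnil : LieRing.IsNilpotent L)
    (hdim : Module.finrank F L = 5)
    (hZ : Module.finrank F (LieAlgebra.center F L) = 1)
    (e : Module.Basis (Fin 5) F L) (β γ : F)
    (hcentral : ∀ x : L, ⁅e 4, x⁆ = 0)
    (h12 : ⁅e 0, e 1⁆ = e 2)
    (h23 : ⁅e 1, e 2⁆ = e 3)
    (h13 : ⁅e 0, e 2⁆ = β • e 4)
    (h24 : ⁅e 1, e 3⁆ = γ • e 4)
    (h14 : ⁅e 0, e 3⁆ = 0)
    (h15 : ⁅e 0, e 4⁆ = 0)
    (h25 : ⁅e 1, e 4⁆ = 0)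
    (h34 : ⁅e 2, e 3⁆ = 0)
    (h35 : ⁅e 2, e 4⁆ = 0)
    (h45 : ⁅e 3, e 4⁆ = 0) :
    γ ≠ 0 ∧
    ∃ f : Module.Basis (Fin 5) F L,
      (Basis.RealizesLieTable f (fun i j =>
        match i, j with
        | 0, 1 => some 2
        | 1, 2 => some 3
        | 1, 3 => some 4
        | _, _ => none) ∨
       Basis.RealizesLieTable f (fun i j =>
        match i, j with
        | 0, 1 => some 2
        | 1, 2 => some 3
        | 1, 3 => some 4
        | 0, 2 => some 4
        | _, _ => none)) := by
  -- An element annihilated by every basis vector lies in the center.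
  have key : ∀ m : L, (∀ i, ⁅e i, m⁆ = 0) → m ∈ LieAlgebra.center F L := by
    intro m hm
    rw [LieAlgebra.center, LieModule.mem_maxTrivSubmodule]
    intro x
    have hx : x ∈ Submodule.span F (Set.range e) := by rw [e.span_eq]; trivial
    induction hx using Submodule.span_induction with
    | mem y hy => obtain ⟨i, rfl⟩ := hy; exact hm i
    | zero => simp
    | add y z _ _ hy hz => rw [add_lie, hy, hz, add_zero]
    | smul c y _ hy => rw [smul_lie, hy, smul_zero]
  -- γ ≠ 0, else e₄ and e₅ would both be central.
  have hγ : γ ≠ 0 := by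
    intro hγ
    subst hγ
    have mem3 : e 3 ∈ LieAlgebra.center F L := by
      apply key
      intro i
      fin_cases i <;> simp [h14, h24, h34, hcentral]
    have mem4 : e 4 ∈ LieAlgebra.center F L := by
      apply key
      intro i
      fin_cases i <;> simp [h15, h25, h35, h45, hcentral]
    have li : LinearIndependent F (![e 3, e 4]) := by
      have := e.linearIndependent.comp ![3, 4] (by decide)
      convert this using 1
      funext i; fin_cases i <;> rfl
    set v : Fin 2 → LieAlgebra.center F L := ![⟨e 3, mem3⟩, ⟨e 4, mem4⟩] with hv
    have liv : LinearIndependent F v := by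
      apply LinearIndependent.of_comp
        ((LieAlgebra.center F L : LieSubmodule F L L) : Submodule F L).subtype
      convert li using 1
      funext i; fin_cases i <;> rfl
      all_goals rfl
    haveI : Module.Finite F (LieAlgebra.center F L) := by infer_instance
    have := liv.fintype_card_le_finrank
    rw [hZ] at this
    simp at this
  refine ⟨hγ, ?_⟩
  by_cases hβ : β = 0
  · subst hβ
    refine ⟨e.unitsSMul ![1, 1, 1, 1, Units.mk0 γ hγ], Or.inl ?_⟩
    intro i j hij
    fin_cases i <;> fin_cases j <;>
      first
      | exact absurd hij (by decide)
      | simp [Module.Basis.unitsSMul_apply, Units.smul_def, smul_lie, lie_smul, smul_smul,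
          h12, h23, h13, h24, h14, h15, h25, h34, h35, h45]
  · refine ⟨e.unitsSMul ![Units.mk0 (γ/β) (div_ne_zero hγ hβ), 1,
      Units.mk0 (γ/β) (div_ne_zero hγ hβ), Units.mk0 (γ/β) (div_ne_zero hγ hβ),
      Units.mk0 (γ/β*γ) (mul_ne_zero (div_ne_zero hγ hβ) hγ)], Or.inr ?_⟩
    intro i j hij
    fin_cases i <;> fin_cases j <;>
      first
      | exact absurd hij (by decide)
      | (simp [Module.Basis.unitsSMul_apply, Units.smul_def, smul_lie, lie_smul, smul_smul,
          h12, h23, h13, h24, h14, h15, h25, h34, h35, h45] <;>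
         field_simp)
end

section
/- Let F be a field and L a 5-dimensional nilpotent Lie algebra over F with dim Z(L) = 2 which admits a basis e₁, …, e₅ in which e₅ is central, ⁅e₁,e₂⁆ = e₃, ⁅e₂,e₃⁆ = e₄, ⁅e₁,e₃⁆ = β·e₅ for some nonzero scalar β ∈ F, and all other brackets of pairs of basis elements are zero. Then L admits a basis f₁, …, f₅ with ⁅f₁,f₂⁆ = f₃, ⁅f₂,f₃⁆ = f₄, ⁅f₁,f₃⁆ = f₅, and all other brackets of pairs of basis elements zero (the algebra A_{5,8}). This is Case 2(ii) of Section 3 of the paper, specialized to n = 2. -/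
/-- Case 2(ii) of Section 3 of the paper for `n = 2`: a 5-dimensional nilpotent Lie
algebra with two-dimensional center admitting a basis `e₁,…,e₅` with `e₅` central,
`⁅e₁,e₂⁆ = e₃`, `⁅e₂,e₃⁆ = e₄`, `⁅e₁,e₃⁆ = β·e₅` (`β ≠ 0`) and all other basis brackets
zero is the algebra `A_{5,8}`. -/
theorem case_two_ii_dim_center_two
    (F : Type*) (L : Type*) [Field F] [LieRing L] [LieAlgebra F L]
    [FiniteDimensional F L]
    (hnil : LieRing.IsNilpotent L)
    (hdim : Module.finrank F L = 5)
    (hZ : Module.finrank F (LieAlgebra.center F L) = 2)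
    (e : Module.Basis (Fin 5) F L) (β : F) (hβ : β ≠ 0)
    (hcentral : ∀ x : L, ⁅e 4, x⁆ = 0)
    (h12 : ⁅e 0, e 1⁆ = e 2)
    (h23 : ⁅e 1, e 2⁆ = e 3)
    (h13 : ⁅e 0, e 2⁆ = β • e 4)
    (h14 : ⁅e 0, e 3⁆ = 0)
    (h15 : ⁅e 0, e 4⁆ = 0)
    (h24 : ⁅e 1, e 3⁆ = 0)
    (h25 : ⁅e 1, e 4⁆ = 0)
    (h34 : ⁅e 2, e 3⁆ = 0)
    (h35 : ⁅e 2, e 4⁆ = 0)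
    (h45 : ⁅e 3, e 4⁆ = 0) :
    ∃ f : Module.Basis (Fin 5) F L,
      Basis.RealizesLieTable f (fun i j =>
        match i, j with
        | 0, 1 => some 2
        | 1, 2 => some 3
        | 0, 2 => some 4
        | _, _ => none) := by
  refine ⟨e.unitsSMul (fun i => if i = 4 then Units.mk0 β hβ else 1), ?_⟩
  intro i j hij
  fin_cases i <;> fin_cases j <;>
    simp_all [Module.Basis.unitsSMul_apply, lie_smul, smul_lie, Option.elim, smul_smul]
end

section
/- Let F be a field and L a 6-dimensional nilpotent Lie algebra over F of nilpotency class exactly 2 (⁅⁅L,L⁆,L⁆ = 0 and ⁅L,L⁆ ≠ 0) with dim Z(L) = 3 and dim ⁅L,L⁆ = 2. Then L admits a basis e₁, …, e₆ with ⁅e₁,e₂⁆ = e₅, ⁅e₂,e₃⁆ = e₆, and all other brackets of pairs of basis elements zero (the algebra A_{6,1}). This is the dim Z(A) = 3 subcase of Case 1 in Section 4 of the paper, specialized to n = 2. -/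
set_option maxHeartbeats 1000000


/-- The `dim Z(A) = 3` subcase of Case 1 in Section 4 of the paper for `n = 2`: a
6-dimensional nilpotent Lie algebra of class exactly 2 with 3-dimensional center and
2-dimensional derived subalgebra is the algebra `A_{6,1}`. -/
theorem dim_six_class_two_center_three
    (F : Type*) (L : Type*) [Field F] [LieRing L] [LieAlgebra F L]
    [FiniteDimensional F L]
    (hdim : Module.finrank F L = 6)
    (hcl2 : ⁅LieAlgebra.derivedSeries F L 1, (⊤ : LieIdeal F L)⁆ = ⊥)
    (hna : LieAlgebra.derivedSeries F L 1 ≠ ⊥)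
    (hZ : Module.finrank F (LieAlgebra.center F L) = 3)
    (hd2 : Module.finrank F (LieAlgebra.derivedSeries F L 1) = 2) :
    ∃ b : Module.Basis (Fin 6) F L,
      Basis.RealizesLieTable b (fun i j =>
        match i, j with
        | 0, 1 => some 4
        | 1, 2 => some 5
        | _, _ => none) := by
  classical
  set ZS : Submodule F L := (LieAlgebra.center F L).toSubmodule with hZSdef
  set DS : Submodule F L := (LieAlgebra.derivedSeries F L 1).toSubmodule with hDSdef
  have hZ' : Module.finrank F ZS = 3 := hZ
  have hd2' : Module.finrank F DS = 2 := hd2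
  have hDtop : LieAlgebra.derivedSeries F L 1 = ⁅(⊤ : LieIdeal F L), (⊤ : LieIdeal F L)⁆ := by
    rw [LieAlgebra.derivedSeries_def, LieAlgebra.derivedSeriesOfIdeal_succ,
      LieAlgebra.derivedSeriesOfIdeal_zero]
  have hbr : ∀ x y : L, ⁅x, y⁆ ∈ DS := by
    intro x y
    have h : ⁅x, y⁆ ∈ ⁅(⊤ : LieIdeal F L), (⊤ : LieIdeal F L)⁆ :=
      LieSubmodule.lie_mem_lie (LieSubmodule.mem_top x) (LieSubmodule.mem_top y)
    rw [← hDtop] at h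
    exact h
  have hcent : ∀ x m : L, m ∈ ZS → ⁅x, m⁆ = 0 := fun x m hm =>
    (LieModule.mem_maxTrivSubmodule F L L m).1 hm x
  have hcent' : ∀ x m : L, m ∈ ZS → ⁅m, x⁆ = 0 := by
    intro x m hm
    rw [← lie_skew, hcent x m hm, neg_zero]
  have hDZ : DS ≤ ZS := by
    intro m hm
    refine (LieModule.mem_maxTrivSubmodule F L L m).2 fun x => ?_
    rw [← lie_skew, neg_eq_zero]
    have h : ⁅m, x⁆ ∈ ⁅LieAlgebra.derivedSeries F L 1, (⊤ : LieIdeal F L)⁆ :=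
      LieSubmodule.lie_mem_lie hm (LieSubmodule.mem_top x)
    rw [hcl2] at h
    simpa using h
  -- Lemma A
  have haveA : ∀ v1 v2 v3 : L,
      (∀ x : L, ∃ a b c : F, ∃ z ∈ ZS, x = a • v1 + b • v2 + c • v3 + z) →
      DS = Submodule.span F {⁅v1, v2⁆, ⁅v1, v3⁆, ⁅v2, v3⁆} := by
    intro v1 v2 v3 hsp
    apply le_antisymm
    · rw [hDSdef, hDtop, LieSubmodule.lieIdeal_oper_eq_linear_span']
      refine Submodule.span_le.2 ?_
      rintro m ⟨x, -, y, -, rfl⟩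
      obtain ⟨a, b, c, z, hz, rfl⟩ := hsp x
      obtain ⟨a', b', c', z', hz', rfl⟩ := hsp y
      have hz1 : ∀ u : L, ⁅u, z'⁆ = 0 := fun u => hcent u z' hz'
      have hz2 : ∀ u : L, ⁅z, u⁆ = 0 := fun u => hcent' u z hz
      have s21 : ⁅v2, v1⁆ = -⁅v1, v2⁆ := by rw [← lie_skew]
      have s31 : ⁅v3, v1⁆ = -⁅v1, v3⁆ := by rw [← lie_skew]
      have s32 : ⁅v3, v2⁆ = -⁅v2, v3⁆ := by rw [← lie_skew]
      have e : ⁅a • v1 + b • v2 + c • v3 + z, a' • v1 + b' • v2 + c' • v3 + z'⁆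
          = (a * b' - b * a') • ⁅v1, v2⁆ + (a * c' - c * a') • ⁅v1, v3⁆
            + (b * c' - c * b') • ⁅v2, v3⁆ := by
        simp only [lie_add, add_lie, lie_smul, smul_lie, hz1, hz2, lie_self, smul_zero,
          zero_add, add_zero, s21, s31, s32]
        module
      rw [e]
      refine Submodule.add_mem _ (Submodule.add_mem _ ?_ ?_) ?_ <;>
        refine Submodule.smul_mem _ _ (Submodule.subset_span ?_) <;> simp
    · refine Submodule.span_le.2 ?_
      rintro x (rfl | rfl | rfl) <;> exact hbr _ _
  -- complement of the center with basis w1 w2 w3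
  obtain ⟨W, hWc⟩ := Submodule.exists_isCompl ZS
  have hW3 : Module.finrank F W = 3 := by
    have h := Submodule.finrank_add_eq_of_isCompl hWc
    rw [hdim, hZ'] at h
    omega
  let w : Module.Basis (Fin 3) F W := Module.finBasisOfFinrankEq F W hW3
  set w1 : L := (w 0 : L)
  set w2 : L := (w 1 : L)
  set w3 : L := (w 2 : L)
  have hspw : ∀ x : L, ∃ a b c : F, ∃ z ∈ ZS, x = a • w1 + b • w2 + c • w3 + z := by
    intro x
    have hx : x ∈ ZS ⊔ W := by rw [hWc.sup_eq_top]; trivial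
    obtain ⟨z, hz, u, hu, rfl⟩ := Submodule.mem_sup.1 hx
    refine ⟨w.repr ⟨u, hu⟩ 0, w.repr ⟨u, hu⟩ 1, w.repr ⟨u, hu⟩ 2, z, hz, ?_⟩
    have hrep : (w.repr ⟨u, hu⟩ 0) • (w 0) + (w.repr ⟨u, hu⟩ 1) • (w 1)
        + (w.repr ⟨u, hu⟩ 2) • (w 2) = (⟨u, hu⟩ : W) := by
      have := w.sum_repr ⟨u, hu⟩
      rwa [Fin.sum_univ_three] at this
    have := congrArg (Submodule.subtype W) hrep
    simp only [map_add, map_smul, Submodule.coe_subtype] at this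
    rw [add_comm z u]
    exact congrArg (fun t => t + z) this.symm
  -- the three brackets are linearly dependent
  have hnli : ¬ LinearIndependent F ![⁅w1, w2⁆, ⁅w1, w3⁆, ⁅w2, w3⁆] := by
    intro h
    have h3 : Module.finrank F
        (Submodule.span F (Set.range ![⁅w1, w2⁆, ⁅w1, w3⁆, ⁅w2, w3⁆])) = 3 := by
      rw [finrank_span_eq_card h]
      simp
    have hle : Submodule.span F (Set.range ![⁅w1, w2⁆, ⁅w1, w3⁆, ⁅w2, w3⁆]) ≤ DS := by
      rw [Submodule.span_le]
      rintro m ⟨i, rfl⟩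
      fin_cases i <;> exact hbr _ _
    have := Submodule.finrank_mono hle
    rw [h3, hd2'] at this
    omega
  obtain ⟨g, hg0, i, hgi⟩ := Fintype.not_linearIndependent_iff.1 hnli
  rw [Fin.sum_univ_three] at hg0
  simp only [Matrix.cons_val_zero, Matrix.cons_val_one, Matrix.head_cons,
    Matrix.cons_val_two, Matrix.tail_cons] at hg0
  -- produce a good triple
  obtain ⟨v1, v2, v3, hsp, h13⟩ : ∃ v1 v2 v3 : L,
      (∀ x : L, ∃ a b c : F, ∃ z ∈ ZS, x = a • v1 + b • v2 + c • v3 + z) ∧ ⁅v1, v3⁆ = 0 := by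
    by_cases h2 : g 2 ≠ 0
    · set a : F := -((g 2)⁻¹ * g 0) with ha
      set b : F := -((g 2)⁻¹ * g 1) with hb
      have hrel : ⁅w2, w3⁆ = a • ⁅w1, w2⁆ + b • ⁅w1, w3⁆ := by
        have h' : g 2 • ⁅w2, w3⁆ = -(g 0 • ⁅w1, w2⁆ + g 1 • ⁅w1, w3⁆) :=
          eq_neg_of_add_eq_zero_right hg0
        have h'' := congrArg (fun m : L => (g 2)⁻¹ • m) h'
        simp only [smul_smul, inv_mul_cancel₀ h2, one_smul, smul_neg, smul_add] at h''
        rw [h'', ha, hb]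
        module
      refine ⟨w2 - b • w1, w1, w3 + a • w1, ?_, ?_⟩
      · intro x
        obtain ⟨p, q, r, z, hz, rfl⟩ := hspw x
        exact ⟨q, p + q * b - r * a, r, z, hz, by module⟩
      · simp only [sub_lie, lie_add, lie_smul, smul_lie, lie_self, smul_zero]
        rw [hrel, ← lie_skew w2 w1]
        module
    · push_neg at h2
      by_cases h1 : g 1 ≠ 0
      · refine ⟨w1, w2, g 0 • w2 + g 1 • w3, ?_, ?_⟩
        · intro x
          obtain ⟨p, q, r, z, hz, rfl⟩ := hspw x
          refine ⟨p, q - r * g 0 * (g 1)⁻¹, r * (g 1)⁻¹, z, hz, ?_⟩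
          match_scalars <;> field_simp <;> ring
        · rw [h2, zero_smul, add_zero] at hg0
          simpa [lie_add, lie_smul] using hg0
      · push_neg at h1
        have h0 : g 0 ≠ 0 := by
          fin_cases i <;> simp_all
        rw [h1, h2, zero_smul, zero_smul, add_zero, add_zero, smul_eq_zero] at hg0
        have hb12 : ⁅w1, w2⁆ = 0 := hg0.resolve_left h0
        refine ⟨w1, w3, w2, ?_, hb12⟩
        intro x
        obtain ⟨p, q, r, z, hz, rfl⟩ := hspw x
        exact ⟨p, r, q, z, hz, by module⟩
  set c1 : L := ⁅v1, v2⁆ with hc1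
  set c2 : L := ⁅v2, v3⁆ with hc2
  have hD : DS = Submodule.span F {c1, (0 : L), c2} := by
    rw [haveA v1 v2 v3 hsp, h13]
  have hDle : DS ≤ Submodule.span F {c1, c2} := by
    rw [hD]
    refine Submodule.span_le.2 ?_
    rintro x (rfl | rfl | rfl)
    · exact Submodule.subset_span (by simp)
    · exact Submodule.zero_mem _
    · exact Submodule.subset_span (by simp)
  -- pick e4 in the center outside DS
  have hDZlt : DS < ZS :=
    Submodule.lt_of_le_of_finrank_lt_finrank hDZ (by rw [hZ', hd2']; omega)
  obtain ⟨e4, he4Z, he4D⟩ := SetLike.exists_of_lt hDZlt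
  have hZeq : ZS = DS ⊔ Submodule.span F {e4} := by
    refine (Submodule.eq_of_le_of_finrank_le ?_ ?_).symm
    · exact sup_le hDZ (Submodule.span_le.2 (by simpa using he4Z))
    · have hlt : DS < DS ⊔ Submodule.span F {e4} := by
        refine lt_of_le_of_ne le_sup_left fun h => he4D ?_
        rw [h]
        exact Submodule.mem_sup_right (Submodule.subset_span rfl)
      have := Submodule.finrank_lt_finrank_of_lt hlt
      rw [hd2'] at this
      rw [hZ']
      omega
  -- the basis
  set bv : Fin 6 → L := ![v1, v2, v3, e4, c1, c2] with hbv
  have htop : ⊤ ≤ Submodule.span F (Set.range bv) := by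
    have hmem : ∀ k : Fin 6, bv k ∈ Submodule.span F (Set.range bv) := fun k =>
      Submodule.subset_span ⟨k, rfl⟩
    have hZle : ZS ≤ Submodule.span F (Set.range bv) := by
      rw [hZeq]
      refine sup_le (le_trans hDle ?_) (Submodule.span_le.2 ?_)
      · refine Submodule.span_le.2 ?_
        rintro x (rfl | rfl)
        · exact hmem 4
        · exact hmem 5
      · exact Set.singleton_subset_iff.2 (hmem 3)
    intro x _
    obtain ⟨a, b, c, z, hz, rfl⟩ := hsp x
    exact Submodule.add_mem _
      (Submodule.add_mem _
        (Submodule.add_mem _ (Submodule.smul_mem _ _ (hmem 0)) (Submodule.smul_mem _ _ (hmem 1)))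
        (Submodule.smul_mem _ _ (hmem 2)))
      (hZle hz)
  have hcard : Fintype.card (Fin 6) = Module.finrank F L := by
    rw [hdim, Fintype.card_fin]
  refine ⟨basisOfTopLeSpanOfCardEqFinrank bv htop hcard, ?_⟩
  have hcoe : ⇑(basisOfTopLeSpanOfCardEqFinrank bv htop hcard) = bv :=
    coe_basisOfTopLeSpanOfCardEqFinrank bv htop hcard
  have hc1Z : c1 ∈ ZS := hDZ (hbr v1 v2)
  have hc2Z : c2 ∈ ZS := hDZ (hbr v2 v3)
  rw [Basis.RealizesLieTable, hcoe]
  intro i j hij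
  fin_cases i <;> fin_cases j <;>
    simp only [hcoe, hbv, Matrix.cons_val_zero, Matrix.cons_val_one, Matrix.head_cons,
      Matrix.cons_val_two, Matrix.tail_cons, Matrix.cons_val_three, Matrix.cons_val_four,
      Fin.isValue, Option.elim] <;>
    first
      | exact absurd hij (by decide)
      | rfl
      | exact h13
      | exact hcent _ _ he4Z
      | exact hcent _ _ hc1Z
      | exact hcent _ _ hc2Z
end
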